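/- arXiv:1808.03692 — 6 statements merged into one kernel-verified Lean document; each statement's English description precedes it below -/
import Mathlib

section
/- Classical measurement error preserves the GENIUS moment identity: if M* = M + ε where ε is independent of (A, Y, M, C, U, W) and E[ε] = 0, and if E[(A − E[A|C])(M − E[M|A,C])Y] = θm·E[(A − E[A|C])(M − E[M|A,C])M], then E[(A − E[A|C])(M* − E[M*|A,C])Y] = θm·E[(A − E[A|C])(M* − E[M*|A,C])M*]. Hence θm = E[(A − E[A|C])(M* − E[M*|A,C])Y] / E[(A − E[A|C])(M* − E[M*|A,C])M*] whenever the denominator is nonzero. -/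
open MeasureTheory ProbabilityTheory

section Aux
variable {α : Type*}

lemma aux_integral_add_zero {_m : MeasurableSpace α} {μ : Measure α} {f g : α → ℝ}
    (hg : Integrable g μ) (hg0 : ∫ x, g x ∂μ = 0) :
    ∫ x, (f x + g x) ∂μ = ∫ x, f x ∂μ := by
  by_cases hf : Integrable f μ
  · rw [integral_add hf hg, hg0, add_zero]
  · rw [integral_undef hf, integral_undef]
    intro h
    have : Integrable (fun x => f x + g x - g x) μ := h.sub hg
    exact hf (by simpa using this)

lemma aux_indep_mono_right {Ω : Type*} {m₁ m₂ m₂' : MeasurableSpace Ω} {mΩ : MeasurableSpace Ω}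
    {μ : Measure Ω} (h : Indep m₁ m₂ μ) (hle : m₂' ≤ m₂) : Indep m₁ m₂' μ := by
  rw [Indep_iff] at h ⊢
  exact fun t1 t2 ht1 ht2 => h t1 t2 ht1 (hle _ ht2)

lemma aux_memL2_condexp {m m0 : MeasurableSpace α} (hm : m ≤ m0) (μ : Measure α)
    [IsProbabilityMeasure μ] {f : α → ℝ} (hf : MemLp f 2 μ) :
    MemLp (μ[f|m]) 2 μ := by
  have hfi : Integrable f μ := hf.integrable one_le_two
  set g := (condExpL2 ℝ ℝ hm (hf.toLp f) : lpMeas ℝ ℝ m 2 μ) with hgdef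
  have heq : (g : α → ℝ) =ᵐ[μ] μ[f|m] := by
    refine ae_eq_condExp_of_forall_setIntegral_eq hm hfi
      (fun s _ _ => (integrable_condExpL2_of_isFiniteMeasure hm).integrableOn)
      (fun s hs hμs => ?_) (aestronglyMeasurable_condExpL2 hm _)
    rw [integral_condExpL2_eq hm (hf.toLp f) hs hμs.ne]
    exact setIntegral_congr_ae (hm s hs) ((hf.coeFn_toLp).mono fun x hx _ => hx)
  exact (Lp.memLp (g : Lp ℝ 2 μ)).ae_eq heq

lemma aux_two_two : (1 : ENNReal) / 1 = 1 / 2 + 1 / 2 := by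
  rw [ENNReal.add_halves]; norm_num

lemma aux_mul_int {_m : MeasurableSpace α} {μ : Measure α} [IsProbabilityMeasure μ]
    {f g : α → ℝ} (hf : MemLp f 2 μ) (hg : MemLp g 2 μ) :
    Integrable (fun x => f x * g x) μ :=
  memLp_one_iff_integrable.mp (hg.smul hf (r := 1))

end Aux

/-- classical measurement error `M* = M + ε`, with `ε` independent of
`(A, Y, M, C, U, W)` and mean zero, preserves the GENIUS moment identity, so `θm` remains
identified by the ratio computed with the mismeasured mediator `M*`. -/
theorem stmt5 {Ω : Type*} [MeasurableSpace Ω] [StandardBorelSpace Ω]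
    (μ : Measure Ω) [IsProbabilityMeasure μ]
    (A M C U W Y ε Mstar : Ω → ℝ)
    (hA : Measurable A) (hM : Measurable M) (hC : Measurable C)
    (hU : Measurable U) (hW : Measurable W) (hYm : Measurable Y) (hε : Measurable ε)
    (hAint : MemLp A 2 μ) (hMint : MemLp M 2 μ) (hYint : MemLp Y 2 μ)
    (hεint : MemLp ε 2 μ)
    -- classical measurement error model E1–E3
    (hE1 : ∀ ω, Mstar ω = M ω + ε ω)
    (hE2 : IndepFun ε (fun ω => (A ω, Y ω, M ω, C ω, U ω, W ω)) μ)
    (hE3 : (∫ ω, ε ω ∂μ) = 0)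
    (θm : ℝ)
    -- GENIUS moment identity for the true mediator M
    (hgenius : ∫ ω, (A ω - (μ[A | MeasurableSpace.comap C inferInstance]) ω)
        * (M ω - (μ[M | MeasurableSpace.comap (fun ω' => (A ω', C ω')) inferInstance]) ω)
        * Y ω ∂μ
      = θm * ∫ ω, (A ω - (μ[A | MeasurableSpace.comap C inferInstance]) ω)
        * (M ω - (μ[M | MeasurableSpace.comap (fun ω' => (A ω', C ω')) inferInstance]) ω)
        * M ω ∂μ) :
    -- the same identity holds with M* in place of M
    (∫ ω, (A ω - (μ[A | MeasurableSpace.comap C inferInstance]) ω)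
        * (Mstar ω - (μ[Mstar | MeasurableSpace.comap (fun ω' => (A ω', C ω')) inferInstance]) ω)
        * Y ω ∂μ
      = θm * ∫ ω, (A ω - (μ[A | MeasurableSpace.comap C inferInstance]) ω)
        * (Mstar ω - (μ[Mstar | MeasurableSpace.comap (fun ω' => (A ω', C ω')) inferInstance]) ω)
        * Mstar ω ∂μ)
    ∧ ((∫ ω, (A ω - (μ[A | MeasurableSpace.comap C inferInstance]) ω)
        * (Mstar ω - (μ[Mstar | MeasurableSpace.comap (fun ω' => (A ω', C ω')) inferInstance]) ω)
        * Mstar ω ∂μ) ≠ 0 →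
      θm = (∫ ω, (A ω - (μ[A | MeasurableSpace.comap C inferInstance]) ω)
        * (Mstar ω - (μ[Mstar | MeasurableSpace.comap (fun ω' => (A ω', C ω')) inferInstance]) ω)
        * Y ω ∂μ)
        / (∫ ω, (A ω - (μ[A | MeasurableSpace.comap C inferInstance]) ω)
        * (Mstar ω - (μ[Mstar | MeasurableSpace.comap (fun ω' => (A ω', C ω')) inferInstance]) ω)
        * Mstar ω ∂μ)) := by
  have hMs : Mstar = fun ω => M ω + ε ω := funext hE1
  subst hMs
  have hmc_le : MeasurableSpace.comap C inferInstance ≤ ‹MeasurableSpace Ω› := hC.comap_le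
  have hmac_le : MeasurableSpace.comap (fun ω' => (A ω', C ω')) inferInstance
      ≤ ‹MeasurableSpace Ω› := (hA.prodMk hC).comap_le
  -- σ-algebras
  set mc : MeasurableSpace Ω := MeasurableSpace.comap C inferInstance with hmc_def
  set mac : MeasurableSpace Ω :=
    MeasurableSpace.comap (fun ω' => (A ω', C ω')) inferInstance with hmac_def
  -- the big tuple σ-algebra
  set T : Ω → ℝ × ℝ × ℝ × ℝ × ℝ × ℝ := fun ω => (A ω, Y ω, M ω, C ω, U ω, W ω) with hT_def
  set mT : MeasurableSpace Ω := MeasurableSpace.comap T inferInstance with hmT_def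
  have hTm : Measurable[mT] T := fun s hs => ⟨s, hs, rfl⟩
  have hA_T : Measurable[mT] A := measurable_fst.comp hTm
  have hY_T : Measurable[mT] Y := (measurable_fst.comp measurable_snd).comp hTm
  have hM_T : Measurable[mT] M :=
    (measurable_fst.comp (measurable_snd.comp measurable_snd)).comp hTm
  have hC_T : Measurable[mT] C :=
    (measurable_fst.comp (measurable_snd.comp (measurable_snd.comp measurable_snd))).comp hTm
  have hmc_le_T : mc ≤ mT := hC_T.comap_le
  have hmac_le_T : mac ≤ mT := (hA_T.prodMk hC_T).comap_le
  -- independence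
  have hindepT : Indep (MeasurableSpace.comap ε inferInstance) mT μ :=
    (IndepFun_iff_Indep _ _ _).mp hE2
  have hindepOf : ∀ {f : Ω → ℝ}, Measurable[mT] f → IndepFun ε f μ := by
    intro f hf
    exact (IndepFun_iff_Indep _ _ _).mpr (aux_indep_mono_right hindepT hf.comap_le)
  -- integrable versions
  have hA1 : Integrable A μ := hAint.integrable one_le_two
  have hM1 : Integrable M μ := hMint.integrable one_le_two
  have hε1 : Integrable ε μ := hεint.integrable one_le_two
  -- conditional expectations
  set EA := μ[A|mc] with hEA_def
  set EM := μ[M|mac] with hEM_def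
  set EMs := μ[(fun ω => M ω + ε ω)|mac] with hEMs_def
  have hEA2 : MemLp EA 2 μ := aux_memL2_condexp hmc_le μ hAint
  have hEM2 : MemLp EM 2 μ := aux_memL2_condexp hmac_le μ hMint
  have hEA_T : Measurable[mT] EA := stronglyMeasurable_condExp.measurable.mono hmc_le_T le_rfl
  have hEM_T : Measurable[mT] EM := stronglyMeasurable_condExp.measurable.mono hmac_le_T le_rfl
  -- E[ε | A,C] = 0 a.e.
  have hεmac : μ[ε|mac] =ᵐ[μ] fun _ => (0 : ℝ) := by
    have hεself : Measurable[MeasurableSpace.comap ε inferInstance] ε := fun s hs => ⟨s, hs, rfl⟩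
    have h := condExp_indep_eq (μ := μ) (f := ε) hε.comap_le hmac_le
      hεself.stronglyMeasurable (aux_indep_mono_right hindepT hmac_le_T)
    simpa [hE3] using h
  have hEMs_eq : EMs =ᵐ[μ] EM := by
    have hadd : EMs =ᵐ[μ] μ[M|mac] + μ[ε|mac] := condExp_add hM1 hε1 mac
    filter_upwards [hadd, hεmac] with ω h1 h2
    simp only [h1, Pi.add_apply, h2, add_zero, hEM_def]
  -- L² differences and products
  have hAE2 : MemLp (fun ω => A ω - EA ω) 2 μ := hAint.sub hEA2
  have hME2 : MemLp (fun ω => M ω - EM ω) 2 μ := hMint.sub hEM2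
  have hAE_T : Measurable[mT] fun ω => A ω - EA ω := hA_T.sub hEA_T
  have hME_T : Measurable[mT] fun ω => M ω - EM ω := hM_T.sub hEM_T
  -- ∫ (A - EA) = 0
  have hAEzero : ∫ ω, (A ω - EA ω) ∂μ = 0 := by
    rw [integral_sub hA1 integrable_condExp, integral_condExp hmc_le, sub_self]
  -- generic vanishing-product facts
  have hvanish : ∀ {h : Ω → ℝ}, Measurable[mT] h → Integrable h μ →
      Integrable (fun ω => h ω * ε ω) μ ∧ (∫ ω, h ω * ε ω ∂μ = 0) := by
    intro h hmT hint
    have hi : IndepFun h ε μ := (hindepOf hmT).symm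
    refine ⟨hi.integrable_mul hint hε1, ?_⟩
    have h0 : ∫ ω, h ω * ε ω ∂μ = (∫ ω, h ω ∂μ) * ∫ ω, ε ω ∂μ :=
      hi.integral_mul_eq_mul_integral hint.aestronglyMeasurable hε1.aestronglyMeasurable
    rw [h0, hE3, mul_zero]
  -- term g1 = (A-EA)·Y·ε
  have hAYint : Integrable (fun ω => (A ω - EA ω) * Y ω) μ := aux_mul_int hAE2 hYint
  have hg1 := hvanish (h := fun ω => (A ω - EA ω) * Y ω) (hAE_T.mul hY_T) hAYint
  -- term g2a = (A-EA)(M-EM)·ε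
  have hAMEint : Integrable (fun ω => (A ω - EA ω) * (M ω - EM ω)) μ := aux_mul_int hAE2 hME2
  have hg2a := hvanish (h := fun ω => (A ω - EA ω) * (M ω - EM ω)) (hAE_T.mul hME_T) hAMEint
  -- term g2b = (A-EA)·M·ε
  have hAMint : Integrable (fun ω => (A ω - EA ω) * M ω) μ := aux_mul_int hAE2 hMint
  have hg2b := hvanish (h := fun ω => (A ω - EA ω) * M ω) (hAE_T.mul hM_T) hAMint
  -- term g2c = (A-EA)·ε²
  have hεε1 : Integrable (fun ω => ε ω * ε ω) μ := aux_mul_int hεint hεint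
  have hAE1 : Integrable (fun ω => A ω - EA ω) μ := hAE2.integrable one_le_two
  have hiεε : IndepFun (fun ω => A ω - EA ω) (fun ω => ε ω * ε ω) μ := by
    have := (hindepOf hAE_T).comp (measurable_id.mul measurable_id) measurable_id
    exact this.symm
  have hg2c_int : Integrable (fun ω => (A ω - EA ω) * (ε ω * ε ω)) μ :=
    hiεε.integrable_mul hAE1 hεε1
  have hg2c_zero : ∫ ω, (A ω - EA ω) * (ε ω * ε ω) ∂μ = 0 := by
    have h0 : ∫ ω, (A ω - EA ω) * (ε ω * ε ω) ∂μ
        = (∫ ω, (A ω - EA ω) ∂μ) * ∫ ω, ε ω * ε ω ∂μ :=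
      hiεε.integral_mul_eq_mul_integral hAE1.aestronglyMeasurable hεε1.aestronglyMeasurable
    rw [h0, hAEzero, zero_mul]
  -- LHS identity
  have hLHS : ∫ ω, (A ω - EA ω) * ((M ω + ε ω) - EMs ω) * Y ω ∂μ
      = ∫ ω, (A ω - EA ω) * (M ω - EM ω) * Y ω ∂μ := by
    have hcongr : ∫ ω, (A ω - EA ω) * ((M ω + ε ω) - EMs ω) * Y ω ∂μ
        = ∫ ω, ((A ω - EA ω) * (M ω - EM ω) * Y ω
            + ((A ω - EA ω) * Y ω) * ε ω) ∂μ := by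
      refine integral_congr_ae ?_
      filter_upwards [hEMs_eq] with ω hω
      rw [hω]; ring
    rw [hcongr, aux_integral_add_zero hg1.1 hg1.2]
  -- RHS identity
  have hRHS : ∫ ω, (A ω - EA ω) * ((M ω + ε ω) - EMs ω) * (M ω + ε ω) ∂μ
      = ∫ ω, (A ω - EA ω) * (M ω - EM ω) * M ω ∂μ := by
    have hGint : Integrable (fun ω => (A ω - EA ω) * (M ω - EM ω) * ε ω
        + (A ω - EA ω) * M ω * ε ω + (A ω - EA ω) * (ε ω * ε ω)) μ :=
      (hg2a.1.add hg2b.1).add hg2c_int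
    have hGzero : ∫ ω, (((A ω - EA ω) * (M ω - EM ω)) * ε ω
        + ((A ω - EA ω) * M ω) * ε ω + (A ω - EA ω) * (ε ω * ε ω)) ∂μ = 0 := by
      have hab : Integrable (fun ω => (A ω - EA ω) * (M ω - EM ω) * ε ω
          + (A ω - EA ω) * M ω * ε ω) μ := hg2a.1.add hg2b.1
      rw [integral_add hab hg2c_int, integral_add hg2a.1 hg2b.1,
        hg2a.2, hg2b.2, hg2c_zero]
      norm_num
    have hcongr : ∫ ω, (A ω - EA ω) * ((M ω + ε ω) - EMs ω) * (M ω + ε ω) ∂μ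
        = ∫ ω, ((A ω - EA ω) * (M ω - EM ω) * M ω
            + (((A ω - EA ω) * (M ω - EM ω)) * ε ω
              + ((A ω - EA ω) * M ω) * ε ω + (A ω - EA ω) * (ε ω * ε ω))) ∂μ := by
      refine integral_congr_ae ?_
      filter_upwards [hEMs_eq] with ω hω
      rw [hω]; ring
    rw [hcongr, aux_integral_add_zero hGint hGzero]
  have hmain : ∫ ω, (A ω - EA ω) * ((M ω + ε ω) - EMs ω) * Y ω ∂μ
      = θm * ∫ ω, (A ω - EA ω) * ((M ω + ε ω) - EMs ω) * (M ω + ε ω) ∂μ := by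
    rw [hLHS, hRHS]; exact hgenius
  refine ⟨hmain, fun hne => ?_⟩
  rw [hmain, mul_div_assoc, div_self hne, mul_one]
end

section
/- Suppose E[Y | M, A, C, W] admits the saturated additive-interaction decomposition E[Y|m,a,c,w] = θ_A(a) + θ_M(m) + θ_C(c) + θ_W(w) + θ_{AM}(a,m) + θ_{AC}(a,c) + θ_{MC}(m,c) + θ_{AW}(a,w) + θ_{WC}(w,c) + θ_{AMC}(a,m,c) + θ_{AWC}(a,w,c) (i.e., no term involving both M and W), and suppose W ⟂ M | (A, C). Then the observed-data contrast E[Y | M=m, A=a, C=c] − E[Y | M=0, A=a, C=c] equals θ_M(m) + θ_{AM}(a,m) + θ_{MC}(m,c) + θ_{AMC}(a,m,c), which is exactly the conditional-on-W contrast γ1(a,m,c) = E[Y|m,a,c,w] − E[Y|0,a,c,w] (constant in w). -/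
open MeasureTheory

/-- if `E[Y|M,A,C,W]` admits a saturated additive decomposition with no term
involving both `M` and `W`, and `W ⟂ M | (A,C)` (so the conditional density of `W` given
`(A,M,C)` does not depend on `M`), then the observed-data contrast
`E[Y|m,a,c] − E[Y|0,a,c]` equals `θM(m) + θAM(a,m) + θMC(m,c) + θAMC(a,m,c)`, which is
exactly the conditional-on-`W` contrast `γ1(a,m,c)` (constant in `w`). -/
theorem stmt7
    -- full outcome regression E[Y | M=m, A=a, C=c, W=w] and its components
    (EY : ℝ → ℝ → ℝ → ℝ → ℝ)
    (θA θM θC θW : ℝ → ℝ)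
    (θAM θAC θMC θAW θWC : ℝ → ℝ → ℝ)
    (θAMC θAWC : ℝ → ℝ → ℝ → ℝ)
    -- saturated decomposition with no M–W term
    (hdec : ∀ m a c w, EY m a c w
      = θA a + θM m + θC c + θW w + θAM a m + θAC a c + θMC m c + θAW a w + θWC w c
        + θAMC a m c + θAWC a w c)
    -- components vanish at the reference value 0 of the mediator argument
    (hθM0 : θM 0 = 0) (hθAM0 : ∀ a, θAM a 0 = 0) (hθMC0 : ∀ c, θMC 0 c = 0)
    (hθAMC0 : ∀ a c, θAMC a 0 c = 0)
    -- conditional density of W given (A=a, C=c); by W ⟂ M | (A,C) it does not depend on m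
    (f_W : ℝ → ℝ → ℝ → ℝ)
    (hfW1 : ∀ a c, (∫ w, f_W w a c) = 1)
    (hfWint : ∀ m a c, Integrable (fun w => EY m a c w * f_W w a c))
    -- observed-data outcome regression E[Y | M=m, A=a, C=c]
    (EYobs : ℝ → ℝ → ℝ → ℝ)
    (hobs : ∀ m a c, EYobs m a c = ∫ w, EY m a c w * f_W w a c)
    -- the conditional-on-W contrast γ1(a,m,c)
    (γ1 : ℝ → ℝ → ℝ → ℝ)
    (hγ1 : ∀ m a c w, EY m a c w - EY 0 a c w = γ1 a m c) :
    ∀ m a c, (EYobs m a c - EYobs 0 a c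
        = θM m + θAM a m + θMC m c + θAMC a m c)
      ∧ EYobs m a c - EYobs 0 a c = γ1 a m c := by
  intro m a c
  set D := θM m + θAM a m + θMC m c + θAMC a m c with hD
  have hdiff : ∀ w, EY m a c w - EY 0 a c w = D := by
    intro w
    simp [hdec, hθM0, hθAM0, hθMC0, hθAMC0, hD]
    ring
  have hfint : Integrable (fun w => f_W w a c) := by
    by_contra h
    have := integral_undef h
    rw [hfW1 a c] at this
    norm_num at this
  have hkey : EYobs m a c - EYobs 0 a c = D := by
    rw [hobs, hobs, ← integral_sub (hfWint m a c) (hfWint 0 a c)]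
    have : (fun w => EY m a c w * f_W w a c - EY 0 a c w * f_W w a c)
        = fun w => D * f_W w a c := by
      funext w
      rw [← sub_mul, hdiff w]
    rw [this, integral_const_mul, hfW1 a c, mul_one]
  refine ⟨hkey, ?_⟩
  rw [hkey, ← hγ1 m a c 0, hdiff 0]
end

section
/- (Multiplicative version.) Suppose Pr[Y=1 | m, a, c, w] = γ2(a,m,c)·Pr[Y=1 | 0, a, c, w] for all w (no multiplicative M–W interaction), and M ⟂ W | C. Then the conditional risk-ratio natural indirect effect RR^{NIE}(a,a*|c) = Pr[Y(a,M(a))=1|c] / Pr[Y(a,M(a*))=1|c], identified conditional on W as [∫ Pr(Y=1|m,a,w,c) f_M(m|a,c) dm]/[∫ Pr(Y=1|m,a,w,c) f_M(m|a*,c) dm], equals [∫ γ2(a,m,c) f_M(m|a,c) dm] / [∫ γ2(a,m,c) f_M(m|a*,c) dm], and equals the naive ratio [∫ Pr(Y=1|m,a,c) f_M(m|a,c) dm]/[∫ Pr(Y=1|m,a,c) f_M(m|a*,c) dm] computed ignoring W. -/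
open MeasureTheory

/-- Result 2, multiplicative version: under the no multiplicative M–W
interaction `Pr[Y=1|m,a,c,w] = γ2(a,m,c)·Pr[Y=1|0,a,c,w]` and `M ⟂ W | C`, the
conditional-on-`W` risk-ratio NIE equals the γ2-ratio and equals the naive ratio
computed ignoring `W`. -/
theorem stmt10
    -- PY m a c w = Pr[Y=1 | M=m, A=a, C=c, W=w]
    (PY : ℝ → ℝ → ℝ → ℝ → ℝ)
    (γ2 : ℝ → ℝ → ℝ → ℝ)
    -- f_M m a c: density of M given (A=a, C=c) (free of w by M ⟂ W | C);
    -- f_W w a c: conditional density of W given (A=a, C=c)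
    (f_M : ℝ → ℝ → ℝ → ℝ) (f_W : ℝ → ℝ → ℝ → ℝ)
    (hfM1 : ∀ a c, (∫ m, f_M m a c) = 1)
    (hfW1 : ∀ a c, (∫ w, f_W w a c) = 1)
    (hfWpos : ∀ w a c, 0 ≤ f_W w a c)
    -- no multiplicative M–W interaction
    (hfact : ∀ m a c w, PY m a c w = γ2 a m c * PY 0 a c w)
    (hb : ∀ a c w, 0 < PY 0 a c w)
    -- naive (observed-data) regression Pr[Y=1 | M=m, A=a, C=c]
    (PYobs : ℝ → ℝ → ℝ → ℝ)
    (hobs : ∀ m a c, PYobs m a c = ∫ w, PY m a c w * f_W w a c)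
    (hint : ∀ m a c, Integrable (fun w => PY m a c w * f_W w a c))
    (hintM : ∀ a a' c w, Integrable (fun m => PY m a' c w * f_M m a c))
    (hintγ : ∀ a a' c, Integrable (fun m => γ2 a' m c * f_M m a c))
    (hintobs : ∀ a a' c, Integrable (fun m => PYobs m a' c * f_M m a c))
    (a astar c : ℝ)
    -- the denominators are nonzero
    (hden : (∫ m, γ2 a m c * f_M m astar c) ≠ 0) :
    ∀ w,
      ((∫ m, PY m a c w * f_M m a c) / (∫ m, PY m a c w * f_M m astar c)
          = (∫ m, γ2 a m c * f_M m a c) / (∫ m, γ2 a m c * f_M m astar c))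
      ∧ ((∫ m, PY m a c w * f_M m a c) / (∫ m, PY m a c w * f_M m astar c)
          = (∫ m, PYobs m a c * f_M m a c) / (∫ m, PYobs m a c * f_M m astar c)) := by

  intro w
  set k := PY 0 a c w with hkdef
  have hk : k ≠ 0 := (hb a c w).ne'
  have h1 : ∀ a', (∫ m, PY m a c w * f_M m a' c) = k * ∫ m, γ2 a m c * f_M m a' c := by
    intro a'
    rw [← integral_const_mul]
    congr 1
    funext m
    rw [hfact]; ring
  set B := ∫ w, PY 0 a c w * f_W w a c with hBdef
  have hB : B ≠ 0 := by
    intro h0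
    have hnn : 0 ≤ᵐ[volume] fun w => PY 0 a c w * f_W w a c := by
      filter_upwards with w'
      exact mul_nonneg (hb a c w').le (hfWpos w' a c)
    have hz : (fun w => PY 0 a c w * f_W w a c) =ᵐ[volume] 0 :=
      (integral_eq_zero_iff_of_nonneg_ae hnn (hint 0 a c)).mp h0
    have hWz : (fun w => f_W w a c) =ᵐ[volume] 0 := by
      filter_upwards [hz] with w' hw'
      have := hb a c w'
      simp only [Pi.zero_apply] at hw' ⊢
      rcases mul_eq_zero.mp hw' with h | h
      · exact absurd h this.ne'
      · exact h
    have : (∫ w, f_W w a c) = 0 := by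
      rw [integral_congr_ae hWz]; simp
    rw [hfW1 a c] at this
    norm_num at this
  have h3 : ∀ a', (∫ m, PYobs m a c * f_M m a' c) = B * ∫ m, γ2 a m c * f_M m a' c := by
    intro a'
    rw [← integral_const_mul]
    congr 1
    funext m
    rw [hobs]
    have : (∫ w', PY m a c w' * f_W w' a c) = γ2 a m c * B := by
      rw [hBdef, ← integral_const_mul]
      congr 1
      funext w'
      rw [hfact]; ring
    rw [this]; ring
  constructor
  · rw [h1 a, h1 astar, mul_div_mul_left _ _ hk]
  · rw [h1 a, h1 astar, h3 a, h3 astar, mul_div_mul_left _ _ hk, mul_div_mul_left _ _ hB]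
end

section
/- If Pr(Y=1 | M, A, C, W) = exp(θ_A(A) + θ_M(M) + θ_C(C) + θ_W(W) + θ_{AM}(A,M) + θ_{AC}(A,C) + θ_{MC}(M,C) + θ_{AW}(A,W) + θ_{WC}(W,C) + θ_{AMC}(A,M,C) + θ_{AWC}(A,W,C)) with no term containing both M and W, and W ⟂ M | (A,C), then the marginal risk ratio Pr(Y=1|m,a,c)/Pr(Y=1|0,a,c) = exp(θ_M(m) + θ_{AM}(a,m) + θ_{MC}(m,c) + θ_{AMC}(a,m,c)), matching exactly the conditional-on-W ratio. -/
open MeasureTheory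

/-- if `Pr(Y=1|M,A,C,W)` is log-additive with no term containing both `M` and
`W`, and `W ⟂ M | (A,C)`, then the marginal risk ratio `Pr(Y=1|m,a,c)/Pr(Y=1|0,a,c)`
equals `exp(θM(m) + θAM(a,m) + θMC(m,c) + θAMC(a,m,c))`, matching the conditional-on-`W`
ratio exactly. -/
theorem stmt11
    (PY : ℝ → ℝ → ℝ → ℝ → ℝ)  -- PY m a c w = Pr(Y=1 | M=m, A=a, C=c, W=w)
    (θA θM θC θW : ℝ → ℝ)
    (θAM θAC θMC θAW θWC : ℝ → ℝ → ℝ)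
    (θAMC θAWC : ℝ → ℝ → ℝ → ℝ)
    -- log-additive decomposition with no M–W term
    (hdec : ∀ m a c w, PY m a c w
      = Real.exp (θA a + θM m + θC c + θW w + θAM a m + θAC a c + θMC m c + θAW a w
          + θWC w c + θAMC a m c + θAWC a w c))
    -- components vanish at the reference value 0 of the mediator argument
    (hθM0 : θM 0 = 0) (hθAM0 : ∀ a, θAM a 0 = 0) (hθMC0 : ∀ c, θMC 0 c = 0)
    (hθAMC0 : ∀ a c, θAMC a 0 c = 0)
    -- conditional density of W given (A=a, C=c); free of m by W ⟂ M | (A,C)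
    (f_W : ℝ → ℝ → ℝ → ℝ)
    (hfW1 : ∀ a c, (∫ w, f_W w a c) = 1)
    (hfWpos : ∀ w a c, 0 ≤ f_W w a c)
    (hint : ∀ m a c, Integrable (fun w => PY m a c w * f_W w a c))
    -- marginal (observed-data) regression Pr(Y=1 | M=m, A=a, C=c)
    (PYobs : ℝ → ℝ → ℝ → ℝ)
    (hobs : ∀ m a c, PYobs m a c = ∫ w, PY m a c w * f_W w a c) :
    ∀ m a c, PYobs m a c / PYobs 0 a c
      = Real.exp (θM m + θAM a m + θMC m c + θAMC a m c) := by
  intro m a c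
  set E : ℝ → ℝ := fun w => Real.exp (θW w + θAW a w + θWC w c + θAWC a w c) with hE
  set Cm : ℝ → ℝ := fun m' => Real.exp (θA a + θM m' + θC c + θAM a m' + θAC a c
    + θMC m' c + θAMC a m' c) with hC
  have hPY : ∀ m' w, PY m' a c w = Cm m' * E w := by
    intro m' w
    rw [hdec, hC, hE, ← Real.exp_add]
    ring_nf
  have hobs' : ∀ m', PYobs m' a c = Cm m' * ∫ w, E w * f_W w a c := by
    intro m'
    rw [hobs]
    simp_rw [hPY, mul_assoc]
    exact integral_const_mul _ _
  have hIint : Integrable (fun w => E w * f_W w a c) := by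
    have h0 := hint 0 a c
    have h2 : (fun w => PY 0 a c w * f_W w a c) = fun w => Cm 0 * (E w * f_W w a c) := by
      ext w; rw [hPY]; ring
    rw [h2] at h0
    exact (integrable_const_mul_iff (isUnit_iff_ne_zero.mpr (Real.exp_ne_zero _)) _).mp h0
  have hIne : (∫ w, E w * f_W w a c) ≠ 0 := by
    intro h
    have hae := (integral_eq_zero_iff_of_nonneg
      (fun w => mul_nonneg (Real.exp_pos _).le (hfWpos w a c)) hIint).mp h
    have hf0 : (fun w => f_W w a c) =ᵐ[volume] 0 := by
      filter_upwards [hae] with w hw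
      rcases mul_eq_zero.mp hw with h1 | h1
      · exact absurd h1 (Real.exp_ne_zero _)
      · exact h1
    have h1 := hfW1 a c
    rw [integral_congr_ae hf0] at h1
    simp at h1
  rw [hobs' m, hobs' 0, mul_div_mul_right _ _ hIne, hC]
  simp only [hθM0, hθAM0, hθMC0, hθAMC0]
  rw [← Real.exp_sub]
  ring_nf
end

section
/- (Hazard-difference identification.) Suppose the conditional hazard is additive with no M–W interaction: λ_T(t|a,m,c,w) = λ_T(t|a,0,c,w) + γ3'(a,m,c,t) for all w, and W ⟂ M | (A,C). Then the marginal hazard contrast obtained from the observed data, λ_T(t|a,m,c) − λ_T(t|a,0,c), where λ_T(t|a,m,c) = −(d/dt) log Pr(T>t|a,m,c), equals γ3'(a,m,c,t). -/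
open MeasureTheory

/-- hazard-difference identification: if the conditional hazard is additive
with no M–W interaction, `λ_T(t|a,m,c,w) = λ_T(t|a,0,c,w) + γ3'(a,m,c,t)`, and
`W ⟂ M | (A,C)`, then the marginal hazard contrast obtained from the observed data,
`λ_T(t|a,m,c) − λ_T(t|a,0,c)` with `λ_T(t|a,m,c) = −(d/dt) log Pr(T>t|a,m,c)`, equals
`γ3'(a,m,c,t)`. -/
theorem stmt15
    (lamT : ℝ → ℝ → ℝ → ℝ → ℝ → ℝ)  -- λ_T t a m c w, conditional on W
    (γ3' : ℝ → ℝ → ℝ → ℝ → ℝ)        -- γ3' a m c t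
    -- no additive M–W interaction in the hazard
    (hadd : ∀ t a m c w, lamT t a m c w = lamT t a 0 c w + γ3' a m c t)
    (hcont : ∀ a m c w, Continuous (fun u => lamT u a m c w))
    (hcontγ : ∀ a m c, Continuous (fun u => γ3' a m c u))
    -- conditional survival given W: S t a m c w = exp(−∫₀ᵗ λ_T(u|a,m,c,w) du)
    (S : ℝ → ℝ → ℝ → ℝ → ℝ → ℝ)
    (hS : ∀ t a m c w, S t a m c w = Real.exp (-∫ u in (0:ℝ)..t, lamT u a m c w))
    -- density of W given (A=a,C=c); free of m by W ⟂ M | (A,C)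
    (f_W : ℝ → ℝ → ℝ → ℝ)
    (hfW1 : ∀ a c, (∫ w, f_W w a c) = 1)
    (hfWpos : ∀ w a c, 0 ≤ f_W w a c)
    -- marginal survival Pr(T>t | a, m, c), marginalizing over W
    (Sobs : ℝ → ℝ → ℝ → ℝ → ℝ)
    (hSobs : ∀ t a m c, Sobs t a m c = ∫ w, S t a m c w * f_W w a c)
    (hSpos : ∀ t a m c, 0 < Sobs t a m c)
    (hint : ∀ t a m c, Integrable (fun w => S t a m c w * f_W w a c))
    -- marginal hazard λ_T(t|a,m,c) = −(d/dt) log Pr(T>t|a,m,c)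
    (lamTobs : ℝ → ℝ → ℝ → ℝ → ℝ)
    (hlamobs : ∀ t a m c,
      lamTobs t a m c = -deriv (fun s => Real.log (Sobs s a m c)) t)
    (hdiff : ∀ t a m c, DifferentiableAt ℝ (fun s => Sobs s a m c) t) :
    ∀ t a m c, lamTobs t a m c - lamTobs t a 0 c = γ3' a m c t := by
  intro t a m c
  -- Key factorization: Sobs s a m c = exp(-∫₀ˢ γ3') * Sobs s a 0 c
  have hfac : ∀ s, Sobs s a m c
      = Real.exp (-∫ u in (0:ℝ)..s, γ3' a m c u) * Sobs s a 0 c := by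
    intro s
    have hSw : ∀ w, S s a m c w
        = Real.exp (-∫ u in (0:ℝ)..s, γ3' a m c u) * S s a 0 c w := by
      intro w
      rw [hS, hS]
      have hint1 : IntervalIntegrable (fun u => lamT u a 0 c w) volume 0 s :=
        (hcont a 0 c w).intervalIntegrable _ _
      have hint2 : IntervalIntegrable (fun u => γ3' a m c u) volume 0 s :=
        (hcontγ a m c).intervalIntegrable _ _
      have : (∫ u in (0:ℝ)..s, lamT u a m c w)
          = (∫ u in (0:ℝ)..s, lamT u a 0 c w) + ∫ u in (0:ℝ)..s, γ3' a m c u := by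
        rw [← intervalIntegral.integral_add hint1 hint2]
        exact intervalIntegral.integral_congr (fun u _ => hadd u a m c w)
      rw [this, neg_add, Real.exp_add]
      ring
    rw [hSobs, hSobs]
    calc (∫ w, S s a m c w * f_W w a c)
        = ∫ w, Real.exp (-∫ u in (0:ℝ)..s, γ3' a m c u) * (S s a 0 c w * f_W w a c) := by
          congr 1; funext w; rw [hSw w]; ring
      _ = Real.exp (-∫ u in (0:ℝ)..s, γ3' a m c u) * ∫ w, S s a 0 c w * f_W w a c :=
          integral_const_mul _ _
  -- log decomposition
  have hlog : (fun s => Real.log (Sobs s a m c))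
      = fun s => (-∫ u in (0:ℝ)..s, γ3' a m c u) + Real.log (Sobs s a 0 c) := by
    funext s
    rw [hfac s, Real.log_mul (Real.exp_ne_zero _) (hSpos s a 0 c).ne', Real.log_exp]
  -- derivative pieces
  have hd1 : HasDerivAt (fun s => -∫ u in (0:ℝ)..s, γ3' a m c u) (-γ3' a m c t) t :=
    ((hcontγ a m c).integral_hasStrictDerivAt 0 t).hasDerivAt.neg
  have hd2 : DifferentiableAt ℝ (fun s => Real.log (Sobs s a 0 c)) t :=
    (hdiff t a 0 c).log (hSpos t a 0 c).ne'
  have hderiv : deriv (fun s => Real.log (Sobs s a m c)) t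
      = -γ3' a m c t + deriv (fun s => Real.log (Sobs s a 0 c)) t := by
    rw [hlog]
    rw [deriv_fun_add hd1.differentiableAt hd2, hd1.deriv]
  rw [hlamobs t a m c, hlamobs t a 0 c, hderiv]
  ring
end

section
/- For A Bernoulli(p) with p ∈ (0,1), the denominator of the GENIUS estimand satisfies E[(A − p)(M − E[M|A])M] = p(1−p)·(var(M|A=1) − var(M|A=0)), and hence is nonzero if and only if the conditional variance of M depends on A. -/
open MeasureTheory

/-- for `A ∼ Bernoulli(p)`, `p ∈ (0,1)`, the GENIUS denominator satisfies
`E[(A − p)(M − E[M|A])M] = p(1−p)·(var(M|A=1) − var(M|A=0))`, hence it is nonzero iff the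
conditional variance of `M` depends on `A`. -/
theorem stmt16 {Ω : Type*} [MeasurableSpace Ω]
    (μ : Measure Ω) [IsProbabilityMeasure μ]
    (A M : Ω → ℝ)
    (hA : Measurable A) (hM : Measurable M)
    (hBer : ∀ ω, A ω = 0 ∨ A ω = 1)
    (p : ℝ) (hp : p = ∫ ω, A ω ∂μ) (hp0 : 0 < p) (hp1 : p < 1)
    (hMint : MemLp M 2 μ)
    -- conditional means of M given A = 1 and A = 0
    (m1 m0 : ℝ)
    (hm1 : m1 = (∫ ω in {ω | A ω = 1}, M ω ∂μ) / (μ {ω | A ω = 1}).toReal)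
    (hm0 : m0 = (∫ ω in {ω | A ω = 0}, M ω ∂μ) / (μ {ω | A ω = 0}).toReal)
    -- conditional variances of M given A = 1 and A = 0
    (v1 v0 : ℝ)
    (hv1 : v1 = (∫ ω in {ω | A ω = 1}, (M ω - m1) ^ 2 ∂μ) / (μ {ω | A ω = 1}).toReal)
    (hv0 : v0 = (∫ ω in {ω | A ω = 0}, (M ω - m0) ^ 2 ∂μ) / (μ {ω | A ω = 0}).toReal) :
    (∫ ω, (A ω - p) * (M ω - (if A ω = 1 then m1 else m0)) * M ω ∂μ
        = p * (1 - p) * (v1 - v0))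
    ∧ ((∫ ω, (A ω - p) * (M ω - (if A ω = 1 then m1 else m0)) * M ω ∂μ) ≠ 0 ↔ v1 ≠ v0) := by
  set s1 : Set Ω := {ω | A ω = 1} with hs1def
  have hs1 : MeasurableSet s1 := hA (measurableSet_singleton 1)
  have hμfin : μ s1 ≠ ⊤ := measure_ne_top μ s1
  have hs0eq : {ω | A ω = 0} = s1ᶜ := by
    ext ω; rcases hBer ω with h | h <;> simp [hs1def, h]
  rw [hs0eq] at hm0 hv0
  -- A is the indicator of s1
  have hAind : A = Set.indicator s1 (fun _ => (1:ℝ)) := by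
    funext ω
    rcases hBer ω with h | h <;> simp [Set.indicator, hs1def, h]
  have hμ1 : (μ s1).toReal = p := by
    have h : ∫ ω, A ω ∂μ = (μ s1).toReal := by
      rw [hAind, integral_indicator hs1, setIntegral_const, smul_eq_mul, mul_one, measureReal_def]
    rw [hp, h]
  have hμ0 : (μ s1ᶜ).toReal = 1 - p := by
    have h := measure_compl hs1 hμfin
    rw [measure_univ] at h
    rw [h, ENNReal.toReal_sub_of_le prob_le_one ENNReal.one_ne_top, ENNReal.toReal_one, hμ1]
  have hpne : p ≠ 0 := hp0.ne'
  have h1pne : (1 : ℝ) - p ≠ 0 := (by linarith : (0:ℝ) < 1 - p).ne'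
  -- integrability facts
  have hMi : Integrable M μ := hMint.integrable one_le_two
  have hMsq : Integrable (fun ω => M ω ^ 2) μ := hMint.integrable_sq
  have hgi : ∀ m : ℝ, Integrable (fun ω => (M ω - m) * M ω) μ := by
    intro m
    have h : (fun ω => (M ω - m) * M ω) = fun ω => M ω ^ 2 - m * M ω := by
      funext ω; ring
    rw [h]; exact hMsq.sub (hMi.const_mul m)
  have hsqi : ∀ m : ℝ, Integrable (fun ω => (M ω - m) ^ 2) μ := by
    intro m
    have h : (fun ω => (M ω - m) ^ 2) = fun ω => M ω ^ 2 - (2 * m) * M ω + m ^ 2 := by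
      funext ω; ring
    rw [h]; exact (hMsq.sub (hMi.const_mul _)).add (integrable_const _)
  -- key identity on a set where m is the conditional mean
  have key : ∀ (s : Set Ω), MeasurableSet s → ∀ m : ℝ,
      m * (μ s).toReal = ∫ ω in s, M ω ∂μ →
      ∫ ω in s, (M ω - m) * M ω ∂μ = ∫ ω in s, (M ω - m) ^ 2 ∂μ := by
    intro s hs m hm
    have h1 : (fun ω => (M ω - m) * M ω)
        = fun ω => (M ω - m) ^ 2 + m * (M ω - m) := by
      funext ω; ring
    have hint2 : Integrable (fun ω => m * (M ω - m)) (μ.restrict s) := by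
      have he : (fun ω => m * (M ω - m)) = fun ω => m * M ω - m * m := by
        funext ω; ring
      rw [he]; exact (hMi.integrableOn.const_mul m).sub (integrable_const _)
    have hint3 : Integrable (fun ω => M ω - m) (μ.restrict s) := by
      have he : (fun ω => M ω - m) = fun ω => M ω - (fun _ => m) ω := rfl
      rw [he]; exact hMi.integrableOn.sub (integrable_const _)
    rw [h1, integral_add ((hsqi m).integrableOn) hint2]
    have h2 : ∫ ω in s, m * (M ω - m) ∂μ = 0 := by
      rw [integral_const_mul]
      have h3 : ∫ ω in s, (M ω - m) ∂μ = (∫ ω in s, M ω ∂μ) - m * (μ s).toReal := by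
        rw [integral_sub hMi.integrableOn (integrable_const m), setIntegral_const,
          smul_eq_mul, measureReal_def]
        ring
      rw [h3, ← hm]; ring
    rw [h2, add_zero]
  have hkm1 : m1 * (μ s1).toReal = ∫ ω in s1, M ω ∂μ := by
    rw [hμ1, hm1, hμ1]; field_simp
  have hkm0 : m0 * (μ s1ᶜ).toReal = ∫ ω in s1ᶜ, M ω ∂μ := by
    rw [hμ0, hm0, hμ0]; field_simp
  -- decompose the integrand
  have hfeq : (fun ω => (A ω - p) * (M ω - (if A ω = 1 then m1 else m0)) * M ω)
      = fun ω => s1.indicator (fun ω => (1 - p) * ((M ω - m1) * M ω)) ω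
          + s1ᶜ.indicator (fun ω => (-p) * ((M ω - m0) * M ω)) ω := by
    funext ω
    rcases hBer ω with h | h
    · have hmem : ω ∉ s1 := by simp [hs1def, h]
      rw [Set.indicator_of_notMem hmem, Set.indicator_of_mem (by simpa using hmem),
        if_neg (by rw [h]; norm_num), h]
      ring
    · have hmem : ω ∈ s1 := h
      rw [Set.indicator_of_mem hmem,
        Set.indicator_of_notMem (by simp [hmem] : ω ∉ s1ᶜ), if_pos h, h]
      ring
  have hIg1 : Integrable (s1.indicator fun ω => (1 - p) * ((M ω - m1) * M ω)) μ :=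
    ((hgi m1).const_mul (1 - p)).indicator hs1
  have hIg0 : Integrable (s1ᶜ.indicator fun ω => (-p) * ((M ω - m0) * M ω)) μ :=
    ((hgi m0).const_mul (-p)).indicator hs1.compl
  have hmain : ∫ ω, (A ω - p) * (M ω - (if A ω = 1 then m1 else m0)) * M ω ∂μ
      = p * (1 - p) * (v1 - v0) := by
    rw [hfeq, integral_add hIg1 hIg0, integral_indicator hs1, integral_indicator hs1.compl,
      integral_const_mul, integral_const_mul, key s1 hs1 m1 hkm1, key s1ᶜ hs1.compl m0 hkm0]
    have e1 : ∫ ω in s1, (M ω - m1) ^ 2 ∂μ = v1 * p := by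
      rw [hv1, hμ1]; field_simp
    have e0 : ∫ ω in s1ᶜ, (M ω - m0) ^ 2 ∂μ = v0 * (1 - p) := by
      rw [hv0, hμ0]; field_simp
    rw [e1, e0]; ring
  refine ⟨hmain, ?_⟩
  rw [hmain]
  constructor
  · intro h hv
    exact h (by rw [hv, sub_self, mul_zero])
  · intro h
    exact mul_ne_zero (mul_ne_zero hpne h1pne) (sub_ne_zero.mpr h)
end
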